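/- arXiv:2007.07348 — 7 statements merged into one kernel-verified Lean document; each statement's English description precedes it below -/
import Mathlib

section
/- For any two vertices a, b of a finite connected graph G with edge set E, E_a T_b + E_b T_a = 2|E| R_{ab}, where R_{ab} is the effective resistance between a and b when each edge is a unit resistor. -/
open Finset Matrix Polynomial

/-- The transition matrix of the simple random walk on a graph:
`P i j = 1/deg(i)` if `i ~ j`, and `0` otherwise. -/
noncomputable def transMatrix {V : Type*} [Fintype V] (G : SimpleGraph V)
    [DecidableRel G.Adj] : Matrix V V ℝ :=
  fun i j => if G.Adj i j then (1 : ℝ) / (G.degree i) else 0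

/-- The stationary distribution of the simple random walk: `π i = deg(i) / (2|E|)`. -/
noncomputable def stationary {V : Type*} [Fintype V] [DecidableEq V] (G : SimpleGraph V)
    [DecidableRel G.Adj] : V → ℝ :=
  fun i => (G.degree i : ℝ) / (2 * G.edgeFinset.card)

/-- `H` is the table of expected hitting times of the simple random walk on `G`:
`H a b = E_a T_b`.  It is characterized by `H b b = 0` and the one-step
(first-step analysis) equations `H a b = 1 + ∑_j P a j * H j b` for `a ≠ b`. -/
def IsHittingTime {V : Type*} [Fintype V] (G : SimpleGraph V) [DecidableRel G.Adj]
    (H : V → V → ℝ) : Prop :=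
  (∀ b, H b b = 0) ∧ ∀ a b, a ≠ b → H a b = 1 + ∑ j, transMatrix G a j * H j b

/-- `R` is the table of effective resistances of `G` (unit resistor on each edge):
`R a b = v a - v b` where `v` is a potential for a unit current flow from `a` to `b`,
i.e. `L v = 1_a - 1_b` for the graph Laplacian `L`. -/
def IsEffectiveResistance {V : Type*} [Fintype V] [DecidableEq V] (G : SimpleGraph V)
    [DecidableRel G.Adj] (R : V → V → ℝ) : Prop :=
  ∀ a b, ∃ v : V → ℝ,
    G.lapMatrix ℝ *ᵥ v =
      (fun x => (if x = a then (1 : ℝ) else 0) - (if x = b then (1 : ℝ) else 0)) ∧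
    R a b = v a - v b

/-!
First-step analysis says that `h_c = H · c` satisfies `L h_c = deg - 2|E| 1_c`: off `c` this is
the one-step equation multiplied by the degree, and at `c` it is forced because the entries of
`L f` always sum to zero. Hence `h_b - h_a - 2|E| v` is harmonic, so constant on the connected
graph, and comparing its values at `a` and `b` gives the identity.
-/

theorem SimpleGraph.sum_lapMatrix_mulVec {V R : Type*} [Fintype V] [DecidableEq V]
    [CommRing R] (G : SimpleGraph V) [DecidableRel G.Adj] (f : V → R) :
    ∑ x, (G.lapMatrix R *ᵥ f) x = 0 := by
  rw [← one_dotProduct, dotProduct_mulVec, ← (G.isSymm_lapMatrix (R := R)).eq, vecMul_transpose,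
    Pi.one_def, G.lapMatrix_mulVec_const_eq_zero, zero_dotProduct]

theorem degree_mul_transMatrix_mulVec {V : Type*} [Fintype V] (G : SimpleGraph V)
    [DecidableRel G.Adj] (f : V → ℝ) (x : V) :
    G.degree x * (transMatrix G *ᵥ f) x = ∑ u ∈ G.neighborFinset x, f u := by
  rcases eq_or_ne (G.degree x) 0 with h | h
  · have no_neighbors : G.neighborFinset x = ∅ := by
      rwa [← card_eq_zero, G.card_neighborFinset_eq_degree]
    simp [h, no_neighbors]
  · rw [mulVec, dotProduct, mul_sum, G.neighborFinset_eq_filter, sum_filter]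
    refine sum_congr rfl fun j _ => ?_
    by_cases hj : G.Adj x j <;> simp [transMatrix, hj, h]

theorem IsHittingTime.lapMatrix_mulVec {V : Type*} [Fintype V] [DecidableEq V]
    {G : SimpleGraph V} [DecidableRel G.Adj] {H : V → V → ℝ} (hH : IsHittingTime G H)
    (c : V) :
    G.lapMatrix ℝ *ᵥ (fun x => H x c) =
      fun x => G.degree x - if x = c then 2 * (#G.edgeFinset : ℝ) else 0 := by
  have off_target : ∀ x ≠ c, (G.lapMatrix ℝ *ᵥ fun y => H y c) x = G.degree x := by
    intro x hx
    have step : G.degree x * H x c = G.degree x + ∑ u ∈ G.neighborFinset x, H u c := by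
      rw [← degree_mul_transMatrix_mulVec, hH.2 x c hx, mul_add, mul_one]
      rfl
    rw [G.lapMatrix_mulVec_apply, step, add_sub_cancel_right]
  have at_target : (G.lapMatrix ℝ *ᵥ fun y => H y c) c = G.degree c - 2 * #G.edgeFinset := by
    have total := G.sum_lapMatrix_mulVec fun y => H y c
    rw [← add_sum_erase _ _ (mem_univ c),
      sum_congr rfl fun y hy => off_target y (ne_of_mem_erase hy)] at total
    have degrees : ∑ y, (G.degree y : ℝ) = 2 * #G.edgeFinset := by
      exact_mod_cast G.sum_degrees_eq_twice_card_edges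
    rw [← add_sum_erase _ _ (mem_univ c)] at degrees
    linarith
  funext x
  split_ifs with hx
  · exact hx ▸ at_target
  · rw [sub_zero]
    exact off_target x hx

/-- Chandra et al.'s identity: for any two vertices `a, b` of a finite connected
graph, `E_a T_b + E_b T_a = 2|E| R_{ab}`. -/
theorem hitting_time_sum_eq_resistance {V : Type*} [Fintype V] [DecidableEq V]
    (G : SimpleGraph V) [DecidableRel G.Adj] (hconn : G.Connected)
    (H : V → V → ℝ) (hH : IsHittingTime G H)
    (R : V → V → ℝ) (hR : IsEffectiveResistance G R) (a b : V) :
    H a b + H b a = 2 * G.edgeFinset.card * R a b := by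
  obtain ⟨v, hv, hRab⟩ := hR a b
  set m := (#G.edgeFinset : ℝ)
  have harmonic : G.lapMatrix ℝ *ᵥ ((fun x => H x b) - (fun x => H x a) - (2 * m) • v) = 0 := by
    rw [mulVec_sub, mulVec_sub, mulVec_smul, hH.lapMatrix_mulVec, hH.lapMatrix_mulVec, hv]
    funext x
    simp only [Pi.sub_apply, Pi.smul_apply, Pi.zero_apply, smul_eq_mul]
    split_ifs <;> ring
  have constant := G.lapMatrix_mulVec_eq_zero_iff_forall_reachable.mp harmonic a b
    (hconn.preconnected a b)
  simp only [Pi.sub_apply, Pi.smul_apply, smul_eq_mul, hH.1] at constant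
  rw [hRab]
  linarith
end

section
/- For any finite connected graph G on n vertices, the Kemeny constant satisfies K ≥ (n-1)²/n, with equality for the complete graph K_n. -/
open Finset Matrix Polynomial

/-!
The transition matrix `P = D⁻¹A` has trace `0`, and for a connected graph `1` is a simple root
of its characteristic polynomial: `P` is similar to the symmetric matrix `D^{-1/2} A D^{-1/2}`,
whose `1`-eigenspace is spanned by `√deg` because `P`-harmonic functions are constant on a
connected graph. Hence the `n - 1` numbers `1 - λⱼ`, `j ≥ 2`, are positive with sum `n`, and the
AM–HM inequality gives `∑ 1 / (1 - λⱼ) ≥ (n - 1)² / n`. For `Kₙ`, `P = (J - I) / (n - 1)`, so every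
eigenvalue other than `1` equals `-1 / (n - 1)` and the bound is attained.
-/

open Module

theorem Finset.sq_card_div_le_sum_one_div {ι R : Type*} [Semifield R] [LinearOrder R]
    [IsStrictOrderedRing R] [ExistsAddOfLE R] (s : Finset ι) {a : ι → R}
    (ha : ∀ i ∈ s, 0 < a i) : (#s : R) ^ 2 / ∑ i ∈ s, a i ≤ ∑ i ∈ s, 1 / a i := by
  simpa using sq_sum_div_le_sum_sq_div s (fun _ => (1 : R)) ha

namespace Matrix

theorem roots_charpoly_of_eq_prod {R n ι : Type*} [CommRing R] [IsDomain R] [Fintype n]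
    [DecidableEq n] [Fintype ι] {A : Matrix n n R} {l : ι → R}
    (h : A.charpoly = ∏ j, (X - C (l j))) : A.charpoly.roots = univ.val.map l := by
  rw [h, roots_prod _ _ (prod_ne_zero_iff.mpr fun j _ => X_sub_C_ne_zero (l j))]
  simp

theorem trace_eq_sum_of_charpoly_eq_prod {R n ι : Type*} [CommRing R] [IsDomain R]
    [Fintype n] [DecidableEq n] [Fintype ι] {A : Matrix n n R} {l : ι → R}
    (h : A.charpoly = ∏ j, (X - C (l j))) : A.trace = ∑ j, l j := by
  rw [trace_eq_sum_roots_charpoly_of_splits (h ▸ Splits.prod fun j _ => Splits.X_sub_C (l j)),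
    roots_charpoly_of_eq_prod h]
  rfl

theorem exists_mulVec_eq_smul_of_isRoot_charpoly {K n : Type*} [Field K] [Fintype n]
    [DecidableEq n] {A : Matrix n n K} {μ : K} (h : A.charpoly.IsRoot μ) :
    ∃ v ≠ 0, A *ᵥ v = μ • v := by
  have : End.HasEigenvalue (toLin' A) μ := by
    rwa [End.hasEigenvalue_iff_mem_spectrum, spectrum_toLin', mem_spectrum_iff_isRoot_charpoly]
  obtain ⟨v, hv⟩ := this.exists_hasEigenvector
  exact ⟨v, hv.2, by simpa using hv.apply_eq_smul⟩

theorem IsHermitian.count_roots_charpoly_le_finrank_eigenspace {𝕜 n : Type*} [RCLike 𝕜]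
    [Fintype n] [DecidableEq n] {A : Matrix n n 𝕜} (hA : A.IsHermitian) (μ : ℝ) :
    A.charpoly.roots.count (μ : 𝕜) ≤ finrank 𝕜 (End.eigenspace (toLin' A) μ) := by
  classical
  let v : {i // hA.eigenvalues i = μ} → End.eigenspace (toLin' A) μ := fun i =>
    ⟨hA.eigenvectorBasis i, by
      rw [End.mem_eigenspace_iff, toLin'_apply, hA.mulVec_eigenvectorBasis, i.2,
        RCLike.real_smul_eq_coe_smul (K := 𝕜)]⟩
  have hv : LinearIndependent 𝕜 v :=
    LinearIndependent.of_comp (Submodule.subtype _)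
      ((hA.eigenvectorBasis.orthonormal.linearIndependent.map' _
        (WithLp.linearEquiv 2 𝕜 (n → 𝕜)).ker).comp _ Subtype.val_injective)
  calc A.charpoly.roots.count (μ : 𝕜) = Fintype.card {i // hA.eigenvalues i = μ} := by
        rw [hA.roots_charpoly_eq_eigenvalues, Multiset.count_map, Fintype.card_subtype,
          card_def, filter_val]
        simp [eq_comm]
    _ ≤ _ := hv.fintype_card_le_finrank

end Matrix

section

variable {V : Type*} [Fintype V] (G : SimpleGraph V) [DecidableRel G.Adj]

theorem trace_transMatrix : (transMatrix G).trace = 0 :=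
  sum_eq_zero fun i _ => by simp [transMatrix]

theorem transMatrix_mulVec_apply (x : V → ℝ) (i : V) :
    (transMatrix G *ᵥ x) i = (∑ j ∈ G.neighborFinset i, x j) / G.degree i := by
  simp only [mulVec, dotProduct, transMatrix, ite_mul, zero_mul, ← sum_filter,
    ← SimpleGraph.neighborFinset_eq_filter, ← sum_div, one_div_mul_eq_div]

variable [DecidableEq V]

theorem lapMatrix_mulVec_apply_eq_degree_mul (x : V → ℝ) (i : V) :
    (G.lapMatrix ℝ *ᵥ x) i = G.degree i * (x i - (transMatrix G *ᵥ x) i) := by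
  rw [G.lapMatrix_mulVec_apply, transMatrix_mulVec_apply, mul_sub]
  by_cases hi : G.degree i = 0
  · rw [← G.card_neighborFinset_eq_degree, card_eq_zero] at hi
    simp [hi]
  · rw [mul_div_cancel₀ _ (Nat.cast_ne_zero.mpr hi)]

/-- `D^{1/2} P D^{-1/2} = D^{-1/2} A D^{-1/2}`. -/
noncomputable def normAdjMatrix : Matrix V V ℝ :=
  diagonal (fun i => √(G.degree i)) * transMatrix G * diagonal (fun i => (√(G.degree i))⁻¹)

theorem normAdjMatrix_apply (i j : V) :
    normAdjMatrix G i j = if G.Adj i j then (√(G.degree i))⁻¹ * (√(G.degree j))⁻¹ else 0 := by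
  simp only [normAdjMatrix, mul_diagonal, diagonal_mul, transMatrix]
  split_ifs
  · rw [mul_one_div, Real.sqrt_div_self', one_div]
  · simp

theorem isHermitian_normAdjMatrix : (normAdjMatrix G).IsHermitian := by
  ext i j
  simp only [conjTranspose_apply, star_trivial, normAdjMatrix_apply, G.adj_comm, mul_comm]

variable {G}

theorem SimpleGraph.Preconnected.eq_of_transMatrix_mulVec_eq_self (hG : G.Preconnected)
    {x : V → ℝ} (hx : transMatrix G *ᵥ x = x) (i j : V) : x i = x j := by
  refine (G.lapMatrix_mulVec_eq_zero_iff_forall_reachable.mp ?_) i j (hG i j)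
  ext k
  rw [lapMatrix_mulVec_apply_eq_degree_mul, hx, sub_self, mul_zero, Pi.zero_apply]

theorem diagonal_inv_sqrt_degree_mul_self (h : ∀ i, 0 < G.degree i) :
    diagonal (fun i => (√(G.degree i))⁻¹) * diagonal (fun i => √(G.degree i)) = 1 := by
  rw [diagonal_mul_diagonal, ← diagonal_one]
  congr 1
  ext i
  exact inv_mul_cancel₀ (Real.sqrt_pos.mpr (mod_cast h i)).ne'

theorem charpoly_normAdjMatrix (h : ∀ i, 0 < G.degree i) :
    (normAdjMatrix G).charpoly = (transMatrix G).charpoly := by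
  rw [normAdjMatrix, charpoly_mul_comm, ← mul_assoc, diagonal_inv_sqrt_degree_mul_self h, one_mul]

theorem eigenspace_normAdjMatrix_one_le (hG : G.Preconnected) (h : ∀ i, 0 < G.degree i) :
    End.eigenspace (toLin' (normAdjMatrix G)) 1 ≤ Submodule.span ℝ {fun i => √(G.degree i)} := by
  intro u hu
  rw [End.mem_eigenspace_iff, toLin'_apply, one_smul] at hu
  have hx : transMatrix G *ᵥ (diagonal (fun i => (√(G.degree i))⁻¹) *ᵥ u) =
      diagonal (fun i => (√(G.degree i))⁻¹) *ᵥ u := by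
    conv_rhs => rw [← hu]
    rw [mulVec_mulVec, mulVec_mulVec, normAdjMatrix, ← mul_assoc, ← mul_assoc,
      diagonal_inv_sqrt_degree_mul_self h, one_mul]
  rcases isEmpty_or_nonempty V with hV | ⟨⟨i₀⟩⟩
  · simp [Subsingleton.elim u 0]
  refine Submodule.mem_span_singleton.mpr
    ⟨(diagonal (fun i => (√(G.degree i))⁻¹) *ᵥ u) i₀, funext fun i => ?_⟩
  rw [Pi.smul_apply, smul_eq_mul, hG.eq_of_transMatrix_mulVec_eq_self hx i₀ i, mulVec_diagonal,
    mul_right_comm, inv_mul_cancel₀ (Real.sqrt_pos.mpr (mod_cast h i)).ne', one_mul]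

theorem count_roots_charpoly_transMatrix_one_le (hG : G.Preconnected) :
    (transMatrix G).charpoly.roots.count 1 ≤ 1 := by
  rcases subsingleton_or_nontrivial V with hV | hV
  · calc (transMatrix G).charpoly.roots.count 1
        ≤ Multiset.card (transMatrix G).charpoly.roots := Multiset.count_le_card _ _
      _ ≤ (transMatrix G).charpoly.natDegree := card_roots' _
      _ = Fintype.card V := charpoly_natDegree_eq_dim _
      _ ≤ 1 := Fintype.card_le_one_iff_subsingleton.mpr hV
  have h : ∀ i, 0 < G.degree i := fun i => hG.degree_pos_of_nontrivial i
  calc (transMatrix G).charpoly.roots.count 1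
      = (normAdjMatrix G).charpoly.roots.count 1 := by
        rw [charpoly_normAdjMatrix h]
    _ ≤ finrank ℝ (End.eigenspace (toLin' (normAdjMatrix G)) (1 : ℝ)) :=
        (isHermitian_normAdjMatrix G).count_roots_charpoly_le_finrank_eigenspace 1
    _ ≤ finrank ℝ (Submodule.span ℝ {fun i => √(G.degree i)}) :=
        Submodule.finrank_mono (eigenspace_normAdjMatrix_one_le hG h)
    _ ≤ 1 := (finrank_span_le_card _).trans (by simp)

theorem SimpleGraph.Preconnected.eq_of_charpoly_transMatrix_eq_prod {ι : Type*} [Fintype ι]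
    {l : ι → ℝ} (hG : G.Preconnected) (hchar : (transMatrix G).charpoly = ∏ j, (X - C (l j)))
    {i j : ι} (hi : l i = 1) (hj : l j = 1) : i = j := by
  have hcount := count_roots_charpoly_transMatrix_one_le hG
  rw [roots_charpoly_of_eq_prod hchar, Multiset.count_map] at hcount
  replace hcount : #(univ.filter fun a => 1 = l a) ≤ 1 := hcount
  exact card_le_one.mp hcount i (by simp [hi]) j (by simp [hj])

section Complete

variable [DecidableRel (⊤ : SimpleGraph V).Adj]

theorem transMatrix_top_mulVec_apply (x : V → ℝ) (i : V) :
    (transMatrix ⊤ *ᵥ x) i = (∑ j, x j - x i) / (Fintype.card V - 1) := by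
  have : Nonempty V := ⟨i⟩
  have hnbr : (⊤ : SimpleGraph V).neighborFinset i = univ.erase i := by
    ext j
    simp [ne_comm]
  rw [transMatrix_mulVec_apply, ← SimpleGraph.card_neighborFinset_eq_degree, hnbr,
    sum_erase_eq_sub (mem_univ i), card_erase_of_mem (mem_univ i), card_univ,
    Nat.cast_pred Fintype.card_pos]

theorem eq_one_or_eq_of_isRoot_charpoly_transMatrix_top [Nontrivial V] {μ : ℝ}
    (h : (transMatrix (⊤ : SimpleGraph V)).charpoly.IsRoot μ) :
    μ = 1 ∨ μ = -1 / (Fintype.card V - 1) := by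
  obtain ⟨v, hv0, hv⟩ := exists_mulVec_eq_smul_of_isRoot_charpoly h
  have hN : (Fintype.card V : ℝ) - 1 ≠ 0 := sub_ne_zero.mpr (mod_cast Fintype.one_lt_card.ne')
  have hvi : ∀ i, μ * v i = (∑ j, v j - v i) / (Fintype.card V - 1) := fun i => by
    rw [← transMatrix_top_mulVec_apply, hv, Pi.smul_apply, smul_eq_mul]
  by_cases hS : ∑ j, v j = 0
  · obtain ⟨i, hi⟩ := Function.ne_iff.mp hv0
    refine Or.inr (mul_right_cancel₀ hi ?_)
    rw [hvi i, hS]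
    ring
  · refine Or.inl (mul_right_cancel₀ hS ?_)
    calc μ * ∑ j, v j = ∑ i, (∑ j, v j - v i) / (Fintype.card V - 1) := by
          rw [mul_sum]; exact sum_congr rfl fun i _ => hvi i
      _ = 1 * ∑ j, v j := by
          rw [← sum_div, sum_sub_distrib, sum_const, card_univ, nsmul_eq_mul]
          field_simp

end Complete

end

/-- For any finite connected graph on `n` vertices, the Kemeny constant
`K = ∑_{j=2}^n 1/(1-λ_j)` (where `1 = λ_1 ≥ λ_2 ≥ ... ≥ λ_n` are the eigenvalues
of the random-walk transition matrix, listed with multiplicity) satisfies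
`K ≥ (n-1)²/n`, with equality for the complete graph `K_n`. -/
theorem kemeny_lower_bound {V : Type*} [Fintype V] [DecidableEq V]
    (G : SimpleGraph V) [DecidableRel G.Adj] (hconn : G.Connected)
    (n : ℕ) (hn : Fintype.card V = n) (hn1 : 0 < n)
    (l : Fin n → ℝ) (hmono : Antitone l) (h1 : l ⟨0, hn1⟩ = 1)
    (hchar : (transMatrix G).charpoly = ∏ j : Fin n, (X - C (l j))) :
    ((n : ℝ) - 1) ^ 2 / n ≤ ∑ j ∈ univ.filter (fun j => j ≠ ⟨0, hn1⟩), 1 / (1 - l j) ∧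
      (G = ⊤ →
        ∑ j ∈ univ.filter (fun j => j ≠ ⟨0, hn1⟩), 1 / (1 - l j) = ((n : ℝ) - 1) ^ 2 / n) := by
  rw [filter_ne']
  have hcard : (#(univ.erase (⟨0, hn1⟩ : Fin n)) : ℝ) = n - 1 := by
    rw [card_erase_of_mem (mem_univ _), card_fin, Nat.cast_pred hn1]
  have hlt : ∀ j ∈ univ.erase ⟨0, hn1⟩, l j < 1 := fun j hj =>
    (h1 ▸ hmono (Nat.zero_le j.val) : l j ≤ 1).lt_of_ne fun hj1 =>
      ne_of_mem_erase hj (hconn.preconnected.eq_of_charpoly_transMatrix_eq_prod hchar hj1 h1)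
  have hgap : ∑ j ∈ univ.erase ⟨0, hn1⟩, (1 - l j) = n := by
    rw [sum_sub_distrib, sum_const, nsmul_one, hcard, sum_erase_eq_sub (mem_univ _),
      ← trace_eq_sum_of_charpoly_eq_prod hchar, trace_transMatrix, h1]
    ring
  refine ⟨hcard ▸ hgap ▸ sq_card_div_le_sum_one_div _ fun j hj => sub_pos.mpr (hlt j hj),
    fun hG => ?_⟩
  subst hG
  have hterm : ∀ j ∈ univ.erase ⟨0, hn1⟩, 1 / (1 - l j) = ((n : ℝ) - 1) / n := fun j hj => by
    have : Nontrivial (Fin n) := ⟨⟨j, _, ne_of_mem_erase hj⟩⟩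
    have : Nontrivial V := (Fintype.equivFinOfCardEq hn).nontrivial
    have hroot : (transMatrix (⊤ : SimpleGraph V)).charpoly.IsRoot (l j) := by
      rw [hchar, IsRoot, eval_prod]
      exact prod_eq_zero (mem_univ j) (by simp)
    have hn2 : (n : ℝ) - 1 ≠ 0 := sub_ne_zero.mpr (hn ▸ mod_cast Fintype.one_lt_card.ne')
    rw [(eq_one_or_eq_of_isRoot_charpoly_transMatrix_top hroot).resolve_left (hlt j hj).ne, hn,
      show 1 - -1 / ((n : ℝ) - 1) = n / (n - 1) by field_simp; ring, one_div_div]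
  rw [sum_congr rfl hterm, sum_const, nsmul_eq_mul, hcard]
  ring
end

section
/- For any connected bipartite graph G on n vertices, the Kemeny constant satisfies K ≥ (2n-3)/2, with equality attained by the complete bipartite graph K_{n/2,n/2} (n even). -/
open Finset Matrix Polynomial

/-!
Every row of the walk matrix `P` averages over neighbours, so its eigenvalues lie in `[-1, 1]`;
they sum to `tr P = 0`. On a connected graph the eigenvalue `1` is simple: `P`-harmonic functions
are constant, and since the degree vector is a left fixed vector of `P`, `P - 1` has no Jordan block
at `0`. The `±1` colouring of a bipartite graph is negated by `P`, so `-1` is an eigenvalue too.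
Hence `K = 1/2 + ∑ 1/(1 - λ)` over the remaining `n - 2` eigenvalues, whose sum is `0`, and
`1/(1 - λ) ≥ 1 + λ` gives `K ≥ n - 3/2`. For `K_{k,k}` one has `P³ = P`, so every nontrivial
eigenvalue is `0` or `-1`, where `1/(1 - λ) = 1 + λ/2`; summing gives `K = n - 3/2`.
-/

section Charpoly

variable {ι κ K : Type*} [Fintype ι] [DecidableEq ι] [Fintype κ] [Field K]

theorem Matrix.isRoot_charpoly_iff_exists_mulVec_eq_smul (M : Matrix ι ι K) (μ : K) :
    M.charpoly.IsRoot μ ↔ ∃ v ≠ 0, M *ᵥ v = μ • v := by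
  rw [← charpoly_toLin', ← Module.End.hasEigenvalue_iff_isRoot_charpoly,
    Module.End.HasEigenvalue, Module.End.HasUnifEigenvalue, Submodule.ne_bot_iff]
  simp only [Module.End.mem_eigenspace_iff, toLin'_apply]
  exact ⟨fun ⟨v, hv, h0⟩ => ⟨v, h0, hv⟩, fun ⟨v, h0, hv⟩ => ⟨v, hv, h0⟩⟩

theorem Polynomial.roots_prod_univ_X_sub_C (l : κ → K) :
    (∏ j, (X - C (l j))).roots = univ.val.map l := by
  rw [Finset.prod_eq_multiset_prod, ← roots_multiset_prod_X_sub_C (univ.val.map l),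
    Multiset.map_map]
  rfl

theorem Polynomial.rootMultiplicity_prod_univ_X_sub_C [DecidableEq K] (l : κ → K) (μ : K) :
    (∏ j, (X - C (l j))).rootMultiplicity μ = #{j | l j = μ} := by
  rw [← count_roots, roots_prod_univ_X_sub_C, Multiset.count_map, Finset.card_def,
    Finset.filter_val]
  simp [eq_comm]

variable {M : Matrix ι ι K} {l : κ → K}

theorem Matrix.trace_eq_sum_of_charpoly_eq_prod_s7 (hchar : M.charpoly = ∏ j, (X - C (l j))) :
    M.trace = ∑ j, l j := by
  have hsplit : M.charpoly.Splits := hchar ▸ Splits.prod fun j _ => Splits.X_sub_C _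
  rw [trace_eq_sum_roots_charpoly_of_splits hsplit, hchar, roots_prod_univ_X_sub_C]
  rfl

theorem Matrix.exists_mulVec_eq_smul_of_charpoly_eq_prod
    (hchar : M.charpoly = ∏ j, (X - C (l j))) (j : κ) : ∃ v ≠ 0, M *ᵥ v = l j • v := by
  rw [← isRoot_charpoly_iff_exists_mulVec_eq_smul, hchar, isRoot_prod]
  exact ⟨j, mem_univ j, root_X_sub_C.2 rfl⟩

theorem Matrix.exists_eq_of_charpoly_eq_prod (hchar : M.charpoly = ∏ j, (X - C (l j))) {μ : K}
    {v : ι → K} (hv : v ≠ 0) (heig : M *ᵥ v = μ • v) : ∃ j, l j = μ := by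
  have hroot := (isRoot_charpoly_iff_exists_mulVec_eq_smul M μ).2 ⟨v, hv, heig⟩
  rw [hchar, isRoot_prod] at hroot
  obtain ⟨j, -, hj⟩ := hroot
  exact ⟨j, root_X_sub_C.1 hj⟩

theorem Matrix.pow_three_eq_self_of_mulVec_eq_smul (hM : M ^ 3 = M) {μ : K} {v : ι → K}
    (hv : v ≠ 0) (heig : M *ᵥ v = μ • v) : μ ^ 3 = μ := by
  refine smul_left_injective K hv ?_
  calc μ ^ 3 • v = (M ^ 3) *ᵥ v := by
        simp [pow_three, ← mulVec_mulVec, heig, mulVec_smul, smul_smul, mul_assoc]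
    _ = μ • v := by rw [hM, heig]

end Charpoly

theorem one_add_le_one_div_one_sub {x : ℝ} (hx : x < 1) : 1 + x ≤ 1 / (1 - x) := by
  rw [le_div_iff₀ (sub_pos.2 hx)]
  nlinarith [sq_nonneg x]

theorem eq_zero_or_eq_neg_one_of_pow_three_eq_self {x : ℝ} (h : x ^ 3 = x) (hx : x ≠ 1) :
    x = 0 ∨ x = -1 := by
  have hfac : x * (x + 1) * (x - 1) = 0 := by linear_combination h
  simpa [sub_eq_zero, hx, add_eq_zero_iff_eq_neg] using hfac

theorem card_add_half_add_sum_le_sum_one_div_one_sub {ι : Type*} [DecidableEq ι] {s : Finset ι}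
    {x : ι → ℝ} (hlt : ∀ j ∈ s, x j < 1) {j₀ : ι} (hj₀ : j₀ ∈ s) (hx₀ : x j₀ = -1) :
    #s + 1 / 2 + ∑ j ∈ s, x j ≤ ∑ j ∈ s, 1 / (1 - x j) := by
  have hle : ∑ j ∈ s.erase j₀, (1 + x j) ≤ ∑ j ∈ s.erase j₀, 1 / (1 - x j) :=
    sum_le_sum fun j hj => one_add_le_one_div_one_sub (hlt j (mem_of_mem_erase hj))
  rw [sum_add_distrib, sum_const, card_erase_of_mem hj₀, nsmul_one,
    Nat.cast_sub (card_pos.2 ⟨j₀, hj₀⟩)] at hle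
  rw [← add_sum_erase s _ hj₀, ← add_sum_erase s _ hj₀, hx₀]
  push_cast at hle
  linarith

theorem sum_one_div_one_sub_of_forall_eq_zero_or_eq_neg_one {ι : Type*} {s : Finset ι}
    {x : ι → ℝ} (hx : ∀ j ∈ s, x j = 0 ∨ x j = -1) :
    ∑ j ∈ s, 1 / (1 - x j) = #s + (∑ j ∈ s, x j) / 2 := by
  have hterm : ∀ j ∈ s, 1 / (1 - x j) = 1 + x j / 2 := fun j hj => by
    rcases hx j hj with h | h <;> rw [h] <;> norm_num
  rw [sum_congr rfl hterm, sum_add_distrib, sum_const, nsmul_one, sum_div]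

namespace SimpleGraph

section Walk

variable {V : Type*} [Fintype V] (G : SimpleGraph V) [DecidableRel G.Adj]

theorem transMatrix_mulVec_apply (v : V → ℝ) (i : V) :
    (transMatrix G *ᵥ v) i = (∑ j ∈ G.neighborFinset i, v j) / G.degree i := by
  simp [transMatrix, mulVec, dotProduct, ite_mul, Finset.sum_ite, neighborFinset_eq_filter,
    div_eq_inv_mul, Finset.mul_sum]

theorem degree_vecMul_transMatrix :
    (fun i => (G.degree i : ℝ)) ᵥ* transMatrix G = fun i => (G.degree i : ℝ) := by
  ext j
  have hterm (i : V) : (G.degree i : ℝ) * transMatrix G i j = if G.Adj j i then 1 else 0 := by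
    by_cases h : G.Adj i j
    · have : (G.degree i : ℝ) ≠ 0 := by
        exact_mod_cast (G.degree_pos_iff_exists_adj i).2 ⟨j, h⟩ |>.ne'
      simp [transMatrix, h, h.symm, this]
    · simp [transMatrix, h, G.adj_comm j i]
  simp [vecMul, dotProduct, hterm, ← neighborFinset_eq_filter]

theorem trace_transMatrix : (transMatrix G).trace = 0 := by
  simp [trace, transMatrix]

variable {G}

theorem abs_le_one_of_transMatrix_mulVec_eq_smul {μ : ℝ} {v : V → ℝ} (hv : v ≠ 0)
    (heig : transMatrix G *ᵥ v = μ • v) : |μ| ≤ 1 := by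
  obtain ⟨j₁, hj₁⟩ := Function.ne_iff.1 hv
  obtain ⟨i, -, hmax⟩ := exists_max_image univ (fun j => |v j|) ⟨j₁, mem_univ j₁⟩
  have hvi : 0 < |v i| := (abs_pos.2 hj₁).trans_le (hmax j₁ (mem_univ j₁))
  have hdeg : (G.degree i : ℝ) * |v i| / G.degree i ≤ |v i| := by
    rcases eq_or_ne (G.degree i : ℝ) 0 with h | h
    · simp [h, hvi.le]
    · rw [mul_div_cancel_left₀ _ h]
  have key : |μ| * |v i| ≤ |v i| := calc
    |μ| * |v i| = |∑ j ∈ G.neighborFinset i, v j| / G.degree i := by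
      rw [← abs_mul, ← smul_eq_mul, ← Pi.smul_apply, ← heig, transMatrix_mulVec_apply, abs_div,
        Nat.abs_cast]
    _ ≤ (G.degree i : ℝ) * |v i| / G.degree i := by
      gcongr
      refine (abs_sum_le_sum_abs _ _).trans ?_
      have := Finset.sum_le_card_nsmul (G.neighborFinset i) _ _ fun j _ => hmax j (mem_univ j)
      rwa [card_neighborFinset_eq_degree, nsmul_eq_mul] at this
    _ ≤ |v i| := hdeg
  nlinarith

theorem eq_of_adj_of_transMatrix_mulVec_eq_self {v : V → ℝ} (hv : transMatrix G *ᵥ v = v)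
    {i j : V} (hmax : ∀ k, v k ≤ v i) (hij : G.Adj i j) : v j = v i := by
  by_contra hne
  have hdeg : (0 : ℝ) < G.degree i := by exact_mod_cast G.degree_pos_iff_exists_adj i |>.2 ⟨j, hij⟩
  have hlt : ∑ k ∈ G.neighborFinset i, v k < ∑ _k ∈ G.neighborFinset i, v i :=
    Finset.sum_lt_sum (fun k _ => hmax k)
      ⟨j, (G.mem_neighborFinset i j).2 hij, (hmax j).lt_of_ne hne⟩
  have hmean := congrFun hv i
  rw [transMatrix_mulVec_apply, div_eq_iff hdeg.ne'] at hmean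
  rw [sum_const, card_neighborFinset_eq_degree, nsmul_eq_mul] at hlt
  linarith

theorem Connected.eq_of_transMatrix_mulVec_eq_self (hconn : G.Connected) {v : V → ℝ}
    (hv : transMatrix G *ᵥ v = v) (x y : V) : v x = v y := by
  obtain ⟨i, -, hmax⟩ := Finset.exists_max_image univ v (univ_nonempty_iff.2 hconn.nonempty)
  have hwalk {a b : V} (p : G.Walk a b) : v a = v i → v b = v i := by
    induction p with
    | nil => exact id
    | cons hadj _ ih =>
      intro ha
      have hmax' : ∀ k, v k ≤ v _ := fun k => ha ▸ hmax k (mem_univ k)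
      exact ih ((eq_of_adj_of_transMatrix_mulVec_eq_self hv hmax' hadj).trans ha)
  rw [hwalk (hconn i x).some rfl, hwalk (hconn i y).some rfl]

theorem Connected.transMatrix_mulVec_eq_self_of_sub_fixed [Nontrivial V] (hconn : G.Connected)
    {w : V → ℝ} (hfix : transMatrix G *ᵥ (transMatrix G *ᵥ w - w) = transMatrix G *ᵥ w - w) :
    transMatrix G *ᵥ w = w := by
  set u := transMatrix G *ᵥ w - w
  obtain ⟨i₀⟩ := hconn.nonempty
  have hconst : u = fun _ => u i₀ :=
    funext fun x => hconn.eq_of_transMatrix_mulVec_eq_self hfix x i₀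
  set d : V → ℝ := fun i => G.degree i
  have hdu : d ⬝ᵥ u = 0 := by
    rw [dotProduct_sub, dotProduct_mulVec, degree_vecMul_transMatrix, sub_self]
  have hd : 0 < ∑ i, d i :=
    Finset.sum_pos (fun i _ => Nat.cast_pos.2 (hconn.preconnected.degree_pos_of_nontrivial i))
      univ_nonempty
  have hu : u i₀ = 0 := by
    rw [hconst, dotProduct, ← Finset.sum_mul] at hdu
    exact (mul_eq_zero.1 hdu).resolve_left hd.ne'
  exact sub_eq_zero.1 (hconst.trans (funext fun _ => hu))

theorem Connected.rootMultiplicity_one_charpoly_transMatrix_le [Nontrivial V] [DecidableEq V]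
    (hconn : G.Connected) : (transMatrix G).charpoly.rootMultiplicity 1 ≤ 1 := by
  set f := toLin' (transMatrix G) - (1 : ℝ) • 1
  have hf (x : V → ℝ) : f x = transMatrix G *ᵥ x - x := by simp [f]
  have hker : LinearMap.ker (f ^ 1) = LinearMap.ker (f ^ 2) := by
    refine le_antisymm (LinearMap.ker_le_ker_comp _ _) fun x hx => ?_
    simp only [LinearMap.mem_ker, pow_two, pow_one, Module.End.mul_apply, hf, sub_eq_zero] at hx ⊢
    exact hconn.transMatrix_mulVec_eq_self_of_sub_fixed hx
  have hle : Module.End.maxGenEigenspace (toLin' (transMatrix G)) 1 ≤ ℝ ∙ (fun _ => (1 : ℝ)) := by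
    intro x hx
    obtain ⟨k, hk⟩ := (Module.End.mem_maxGenEigenspace _ _ _).1 hx
    have hx1 : f x = 0 := by
      rcases k with _ | k
      · simp_all
      · rw [← pow_one f, ← LinearMap.mem_ker, Module.End.ker_pow_constant hker k, add_comm]
        exact hk
    obtain ⟨i₀⟩ := hconn.nonempty
    refine Submodule.mem_span_singleton.2 ⟨x i₀, funext fun i => ?_⟩
    rw [hf, sub_eq_zero] at hx1
    simp [hconn.eq_of_transMatrix_mulVec_eq_self hx1 i i₀]
  rw [← charpoly_toLin', ← LinearMap.finrank_maxGenEigenspace_eq]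
  exact (Submodule.finrank_mono hle).trans (finrank_span_le_card _ |>.trans (by simp))

theorem Colorable.exists_transMatrix_mulVec_eq_neg [Nonempty V] (hbip : G.Colorable 2)
    (hdeg : ∀ i, 0 < G.degree i) : ∃ v ≠ 0, transMatrix G *ᵥ v = (-1 : ℝ) • v := by
  obtain ⟨c⟩ := hbip
  set v : V → ℝ := fun i => if c i = 0 then 1 else -1
  have hflip {i j : V} (hij : G.Adj i j) : v j = -v i := by
    have hc := c.valid hij
    simp only [v]
    generalize c i = x, c j = y at hc
    fin_cases x <;> fin_cases y <;> simp_all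
  refine ⟨v, fun h => ?_, funext fun i => ?_⟩
  · have := congrFun h (Classical.arbitrary V)
    simp only [v] at this
    split_ifs at this <;> norm_num at this
  · have hdi : (G.degree i : ℝ) ≠ 0 := Nat.cast_ne_zero.2 (hdeg i).ne'
    rw [transMatrix_mulVec_apply,
      Finset.sum_congr rfl fun j hj => hflip ((G.mem_neighborFinset i j).1 hj),
      sum_const, card_neighborFinset_eq_degree, nsmul_eq_mul]
    field_simp
    simp

end Walk

section CompleteBipartite

variable {α β : Type*} [Fintype α] [Fintype β] [DecidableRel (completeBipartiteGraph α β).Adj]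

theorem degree_completeBipartiteGraph_inl (a : α) :
    (completeBipartiteGraph α β).degree (.inl a) = Fintype.card β := by
  have hnbr : (completeBipartiteGraph α β).neighborFinset (.inl a) = univ.map .inr := by
    ext (x | x) <;> simp
  rw [← card_neighborFinset_eq_degree, hnbr, card_map, card_univ]

theorem degree_completeBipartiteGraph_inr (b : β) :
    (completeBipartiteGraph α β).degree (.inr b) = Fintype.card α := by
  have hnbr : (completeBipartiteGraph α β).neighborFinset (.inr b) = univ.map .inl := by
    ext (x | x) <;> simp
  rw [← card_neighborFinset_eq_degree, hnbr, card_map, card_univ]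

theorem transMatrix_completeBipartiteGraph_pow_three [DecidableEq α] [DecidableEq β] :
    transMatrix (completeBipartiteGraph α β) ^ 3 = transMatrix (completeBipartiteGraph α β) := by
  ext (a | b) (a' | b') <;>
    simp [pow_three, Matrix.mul_apply, Fintype.sum_sum_type, transMatrix,
      degree_completeBipartiteGraph_inl, degree_completeBipartiteGraph_inr]
  · have : Nonempty α := ⟨a⟩
    have : Nonempty β := ⟨b'⟩
    field_simp
  · have : Nonempty α := ⟨a'⟩
    have : Nonempty β := ⟨b⟩
    field_simp

variable {V : Type*} [Fintype V] {G : SimpleGraph V} [DecidableRel G.Adj]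

theorem Iso.transMatrix_eq_submatrix {W : Type*} [Fintype W] {H : SimpleGraph W}
    [DecidableRel H.Adj] (e : G ≃g H) : transMatrix G = (transMatrix H).submatrix e e := by
  ext i j
  simp [transMatrix, e.map_adj_iff, Iso.degree_eq]

theorem Iso.transMatrix_pow_three_eq_self [DecidableEq α] [DecidableEq β] [DecidableEq V]
    (e : G ≃g completeBipartiteGraph α β) : transMatrix G ^ 3 = transMatrix G := by
  rw [e.transMatrix_eq_submatrix, pow_three, ← submatrix_mul _ _ _ _ _ e.bijective,
    ← submatrix_mul _ _ _ _ _ e.bijective, ← pow_three,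
    transMatrix_completeBipartiteGraph_pow_three]

end CompleteBipartite

section Spectrum

variable {V κ : Type*} [Fintype V] [DecidableEq V] [Fintype κ] {G : SimpleGraph V}
  [DecidableRel G.Adj] {l : κ → ℝ}

theorem sum_eq_zero_of_charpoly_transMatrix_eq_prod
    (hchar : (transMatrix G).charpoly = ∏ j, (X - C (l j))) : ∑ j, l j = 0 := by
  rw [← trace_eq_sum_of_charpoly_eq_prod_s7 hchar, trace_transMatrix]

theorem abs_le_one_of_charpoly_transMatrix_eq_prod
    (hchar : (transMatrix G).charpoly = ∏ j, (X - C (l j))) (j : κ) : |l j| ≤ 1 := by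
  obtain ⟨v, hv, heig⟩ := exists_mulVec_eq_smul_of_charpoly_eq_prod hchar j
  exact abs_le_one_of_transMatrix_mulVec_eq_smul hv heig

theorem Connected.eq_of_charpoly_transMatrix_eq_prod [Nontrivial V] (hconn : G.Connected)
    (hchar : (transMatrix G).charpoly = ∏ j, (X - C (l j))) {i j : κ} (hi : l i = 1)
    (hj : l j = 1) : i = j := by
  have hsimple := hconn.rootMultiplicity_one_charpoly_transMatrix_le
  rw [hchar, rootMultiplicity_prod_univ_X_sub_C] at hsimple
  exact Finset.card_le_one.1 hsimple i (by simpa using hi) j (by simpa using hj)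

theorem Colorable.exists_eq_neg_one_of_charpoly_transMatrix_eq_prod [Nontrivial V]
    (hconn : G.Connected) (hbip : G.Colorable 2)
    (hchar : (transMatrix G).charpoly = ∏ j, (X - C (l j))) : ∃ j, l j = -1 := by
  obtain ⟨v, hv, heig⟩ :=
    hbip.exists_transMatrix_mulVec_eq_neg fun i => hconn.preconnected.degree_pos_of_nontrivial i
  exact exists_eq_of_charpoly_eq_prod hchar hv heig

theorem Iso.pow_three_eq_self_of_charpoly_transMatrix_eq_prod {α β : Type*} [Fintype α]
    [Fintype β] [DecidableEq α] [DecidableEq β] [DecidableRel (completeBipartiteGraph α β).Adj]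
    (e : G ≃g completeBipartiteGraph α β)
    (hchar : (transMatrix G).charpoly = ∏ j, (X - C (l j))) (j : κ) : l j ^ 3 = l j := by
  obtain ⟨v, hv, heig⟩ := exists_mulVec_eq_smul_of_charpoly_eq_prod hchar j
  exact pow_three_eq_self_of_mulVec_eq_smul e.transMatrix_pow_three_eq_self hv heig

end Spectrum

end SimpleGraph

theorem kemeny_lower_bound_bipartite_general {V : Type*} [Fintype V] [DecidableEq V]
    (G : SimpleGraph V) [DecidableRel G.Adj] (hconn : G.Connected)
    (hbip : G.Colorable 2)
    (n : ℕ) (hn : Fintype.card V = n) (hn1 : 0 < n)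
    (l : Fin n → ℝ) (h1 : l ⟨0, hn1⟩ = 1)
    (hchar : (transMatrix G).charpoly = ∏ j : Fin n, (X - C (l j))) :
    (2 * (n : ℝ) - 3) / 2 ≤ ∑ j ∈ univ.filter (fun j => j ≠ ⟨0, hn1⟩), 1 / (1 - l j) ∧
      (∀ k : ℕ, n = 2 * k →
        Nonempty (G ≃g completeBipartiteGraph (Fin k) (Fin k)) →
        ∑ j ∈ univ.filter (fun j => j ≠ ⟨0, hn1⟩), 1 / (1 - l j) = (2 * (n : ℝ) - 3) / 2) := by
  classical
  set z : Fin n := ⟨0, hn1⟩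
  set T := univ.filter fun j => j ≠ z
  have hT : T = univ.erase z := filter_ne' univ z
  have hcard : (#T : ℝ) = n - 1 := by
    rw [hT, card_erase_of_mem (mem_univ z), card_univ, Fintype.card_fin, Nat.cast_pred hn1]
  obtain rfl | h2 : n = 1 ∨ 1 < n := by omega
  · refine ⟨?_, fun k hk => by omega⟩
    rw [hT, univ_unique, Subsingleton.elim z default, erase_singleton, sum_empty]
    norm_num
  have : Nontrivial V := Fintype.one_lt_card_iff_nontrivial.1 (hn ▸ h2)
  have hsumT : ∑ j ∈ T, l j = -1 := by
    have := SimpleGraph.sum_eq_zero_of_charpoly_transMatrix_eq_prod hchar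
    rw [← add_sum_erase _ _ (mem_univ z), ← hT, h1] at this
    linarith
  have hlt : ∀ j ∈ T, l j < 1 := fun j hj =>
    (abs_le.1 (SimpleGraph.abs_le_one_of_charpoly_transMatrix_eq_prod hchar j)).2.lt_of_ne
      fun h => (mem_filter.1 hj).2 (hconn.eq_of_charpoly_transMatrix_eq_prod hchar h h1)
  refine ⟨?_, fun _ _ ⟨e⟩ => ?_⟩
  · obtain ⟨j₀, hj₀⟩ := hbip.exists_eq_neg_one_of_charpoly_transMatrix_eq_prod hconn hchar
    have hj₀T : j₀ ∈ T := mem_filter.2 ⟨mem_univ _, fun h => by norm_num [h, h1] at hj₀⟩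
    have := card_add_half_add_sum_le_sum_one_div_one_sub hlt hj₀T hj₀
    rw [hcard, hsumT] at this
    linarith
  · have h01 : ∀ j ∈ T, l j = 0 ∨ l j = -1 := fun j hj =>
      eq_zero_or_eq_neg_one_of_pow_three_eq_self
        (e.pow_three_eq_self_of_charpoly_transMatrix_eq_prod hchar j) (hlt j hj).ne
    rw [sum_one_div_one_sub_of_forall_eq_zero_or_eq_neg_one h01, hcard, hsumT]
    ring

/-- For any connected bipartite graph on `n` vertices, the Kemeny constant
`K = ∑_{j=2}^n 1/(1-λ_j)` satisfies `K ≥ (2n-3)/2`, and equality is attained by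
the complete bipartite graph `K_{n/2,n/2}` (`n` even). -/
theorem kemeny_lower_bound_bipartite {V : Type*} [Fintype V] [DecidableEq V]
    (G : SimpleGraph V) [DecidableRel G.Adj] (hconn : G.Connected)
    (hbip : G.Colorable 2)
    (n : ℕ) (hn : Fintype.card V = n) (hn1 : 0 < n)
    (l : Fin n → ℝ) (hmono : Antitone l) (h1 : l ⟨0, hn1⟩ = 1)
    (hchar : (transMatrix G).charpoly = ∏ j : Fin n, (X - C (l j))) :
    (2 * (n : ℝ) - 3) / 2 ≤ ∑ j ∈ univ.filter (fun j => j ≠ ⟨0, hn1⟩), 1 / (1 - l j) ∧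
      (∀ k : ℕ, n = 2 * k →
        Nonempty (G ≃g completeBipartiteGraph (Fin k) (Fin k)) →
        ∑ j ∈ univ.filter (fun j => j ≠ ⟨0, hn1⟩), 1 / (1 - l j) = (2 * (n : ℝ) - 3) / 2) :=
  kemeny_lower_bound_bipartite_general G hconn hbip n hn hn1 l h1 hchar
end

section
/- If G is a highly symmetric graph in which every vertex is resistance regular, then G is regular. -/
open Finset Matrix Polynomial

/-!
Summing the first-step equations shows that the Laplacian maps the column `h_b = E_· T_b` to
`deg - 2|E| 1_b`. Comparing with the unit-current potentials gives the commute-time identity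
`E_a T_b + E_b T_a = 2|E| R_ab`, and reading it off at `b` gives
`∑_{u ~ b} E_u T_b = 2|E| - deg b`. In a highly symmetric graph `E_u T_b = |E| R_ub`, so at a
resistance regular vertex `b` with common neighbour resistance `r_b` we get
`deg b * (|E| r_b + 1) = 2|E|`. As `R` is symmetric, adjacent vertices have the same `r`, hence
the same degree, and connectivity spreads this over the whole graph.
-/

namespace SimpleGraph

theorem Preconnected.eq_of_forall_adj {V β : Type*} {G : SimpleGraph V} (hG : G.Preconnected)
    {f : V → β} (hf : ∀ i j, G.Adj i j → f i = f j) (i j : V) : f i = f j := by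
  obtain ⟨p⟩ := hG i j
  induction p with
  | nil => rfl
  | cons hadj _ ih => exact (hf _ _ hadj).trans ih

theorem sum_lapMatrix_mulVec_s14 {V : Type*} [Fintype V] {G : SimpleGraph V} [DecidableEq V]
    [DecidableRel G.Adj] (w : V → ℝ) :
    ∑ x, (G.lapMatrix ℝ *ᵥ w) x = 0 := by
  have h := dotProduct_mulVec (fun _ => (1 : ℝ)) (G.lapMatrix ℝ) w
  rw [← (G.isSymm_lapMatrix ℝ).eq, vecMul_transpose, (G.isSymm_lapMatrix ℝ).eq,
    lapMatrix_mulVec_const_eq_zero, zero_dotProduct] at h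
  simpa [dotProduct] using h

end SimpleGraph

section

open SimpleGraph

variable {V : Type*} [Fintype V] {G : SimpleGraph V}

theorem degree_mul_transMatrix [DecidableRel G.Adj] (a j : V) :
    (G.degree a : ℝ) * transMatrix G a j = if G.Adj a j then 1 else 0 := by
  unfold transMatrix
  split_ifs with hadj
  · have : (G.degree a : ℝ) ≠ 0 := by
      exact_mod_cast ((G.degree_pos_iff_exists_adj a).mpr ⟨j, hadj⟩).ne'
    field_simp
  · simp

/-- A potential for a unit current from `a` to `b` is, negated, one from `b` to `a`. -/
theorem IsEffectiveResistance.symm [DecidableEq V] [DecidableRel G.Adj] {R : V → V → ℝ}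
    (hR : IsEffectiveResistance G R) (hconn : G.Connected) (a b : V) : R a b = R b a := by
  obtain ⟨v, hv, hRab⟩ := hR a b
  obtain ⟨v', hv', hRba⟩ := hR b a
  have hsum : G.lapMatrix ℝ *ᵥ (v + v') = 0 := by
    ext x
    simp only [mulVec_add, hv, hv', Pi.add_apply, Pi.zero_apply]
    ring
  have := (lapMatrix_mulVec_eq_zero_iff_forall_reachable G).mp hsum a b (hconn a b)
  simp only [Pi.add_apply] at this
  rw [hRab, hRba]
  linarith

namespace IsHittingTime

variable [DecidableRel G.Adj] {H : V → V → ℝ}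

theorem degree_mul_of_ne (hH : IsHittingTime G H) {a b : V} (hab : a ≠ b) :
    G.degree a * H a b = G.degree a + ∑ u ∈ G.neighborFinset a, H u b := by
  rw [hH.2 a b hab, mul_add, mul_one, mul_sum, neighborFinset_eq_filter, sum_filter]
  simp only [← mul_assoc, degree_mul_transMatrix, ite_mul, one_mul, zero_mul]

variable [DecidableEq V]

theorem lapMatrix_mulVec_apply_of_ne (hH : IsHittingTime G H) {a b : V} (hab : a ≠ b) :
    (G.lapMatrix ℝ *ᵥ fun x => H x b) a = G.degree a := by
  rw [lapMatrix_mulVec_apply, hH.degree_mul_of_ne hab]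
  ring

/-- The value at `b` is forced by `∑ x, (L h) x = 0` and the handshake lemma. -/
theorem lapMatrix_mulVec_s14 (hH : IsHittingTime G H) (b : V) :
    G.lapMatrix ℝ *ᵥ (fun x => H x b) =
      fun x => G.degree x - if x = b then (2 * #G.edgeFinset : ℝ) else 0 := by
  ext x
  rcases eq_or_ne x b with rfl | hxb
  · have hsum := sum_lapMatrix_mulVec_s14 (G := G) fun y => H y x
    rw [← add_sum_erase _ _ (mem_univ x),
      sum_congr rfl fun y hy => hH.lapMatrix_mulVec_apply_of_ne (ne_of_mem_erase hy),
      sum_erase_eq_sub (mem_univ x), ← Nat.cast_sum, sum_degrees_eq_twice_card_edges] at hsum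
    push_cast at hsum
    rw [if_pos rfl]
    linarith
  · rw [hH.lapMatrix_mulVec_apply_of_ne hxb, if_neg hxb, sub_zero]

theorem sum_neighborFinset (hH : IsHittingTime G H) (b : V) :
    ∑ u ∈ G.neighborFinset b, H u b = 2 * #G.edgeFinset - G.degree b := by
  have := congrFun (hH.lapMatrix_mulVec_s14 b) b
  rw [lapMatrix_mulVec_apply, if_pos rfl, hH.1 b] at this
  linarith

/-- `H · b - H · a` and `2|E| v`, for a unit-current potential `v` from `a` to `b`, have the same
Laplacian, so they differ by a harmonic, hence constant, function. -/
theorem add_eq_mul_resistance (hH : IsHittingTime G H) (hconn : G.Connected)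
    {R : V → V → ℝ} (hR : IsEffectiveResistance G R) (a b : V) :
    H a b + H b a = 2 * #G.edgeFinset * R a b := by
  obtain ⟨v, hv, hRab⟩ := hR a b
  set w : V → ℝ := fun x => H x b - H x a - 2 * #G.edgeFinset * v x
  have hw : G.lapMatrix ℝ *ᵥ w = 0 := by
    have : w = (fun x => H x b) - (fun x => H x a) - (2 * #G.edgeFinset : ℝ) • v := rfl
    rw [this, mulVec_sub, mulVec_sub, mulVec_smul, hH.lapMatrix_mulVec_s14 b,
      hH.lapMatrix_mulVec_s14 a, hv]
    ext x
    simp only [Pi.sub_apply, Pi.smul_apply, smul_eq_mul, Pi.zero_apply]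
    split_ifs <;> ring
  have hconst := (lapMatrix_mulVec_eq_zero_iff_forall_reachable G).mp hw a b (hconn a b)
  rw [hRab]
  linear_combination hconst + hH.1 a + hH.1 b

theorem degree_mul_resistance_add_one (hH : IsHittingTime G H) (hconn : G.Connected)
    (hHS : ∀ a b, H a b = H b a) {R : V → V → ℝ} (hR : IsEffectiveResistance G R) {i j : V}
    (hres : ∀ u, G.Adj i u → R i u = R i j) :
    G.degree i * (#G.edgeFinset * R i j + 1) = 2 * #G.edgeFinset := by
  have hret : ∀ u ∈ G.neighborFinset i, H u i = #G.edgeFinset * R i j := fun u hu => by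
    have := hH.add_eq_mul_resistance hconn hR i u
    rw [hHS i u, hres u ((G.mem_neighborFinset i u).mp hu)] at this
    linarith
  have := hH.sum_neighborFinset i
  rw [sum_congr rfl hret, sum_const, G.card_neighborFinset_eq_degree, nsmul_eq_mul] at this
  linarith

end IsHittingTime

end

/-- If `G` is a highly symmetric graph in which every vertex is resistance
regular (`R_{ij} = R_{ik}` for all neighbors `j, k` of `i`), then `G` is regular. -/
theorem HS_resistance_regular_implies_regular {V : Type*} [Fintype V] [DecidableEq V]
    (G : SimpleGraph V) [DecidableRel G.Adj] (hconn : G.Connected)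
    (H : V → V → ℝ) (hH : IsHittingTime G H) (hHS : ∀ a b, H a b = H b a)
    (R : V → V → ℝ) (hR : IsEffectiveResistance G R)
    (hrr : ∀ i j k, G.Adj i j → G.Adj i k → R i j = R i k) :
    ∃ d, G.IsRegularOfDegree d := by
  have hadj : ∀ i j, G.Adj i j → G.degree i = G.degree j := by
    intro i j hij
    have hi := hH.degree_mul_resistance_add_one hconn hHS hR fun u hu => hrr i u j hu hij
    have hj := hH.degree_mul_resistance_add_one hconn hHS hR fun u hu => hrr j u i hu hij.symm
    rw [← hR.symm hconn i j] at hj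
    have hE : (0 : ℝ) < 2 * #G.edgeFinset := by
      have : 0 < #G.edgeFinset := card_pos.mpr ⟨s(i, j), G.mem_edgeFinset.mpr hij⟩
      positivity
    exact_mod_cast
      mul_right_cancel₀ (right_ne_zero_of_mul (hi.trans_ne hE.ne')) (hi.trans hj.symm)
  obtain ⟨v⟩ := hconn.nonempty
  exact ⟨G.degree v, fun u => hconn.preconnected.eq_of_forall_adj hadj u v⟩
end

section
/- No tree on more than two vertices is highly symmetric. -/
open Finset Matrix Polynomial

lemma return_identity {V : Type*} [Fintype V] [DecidableEq V] (G : SimpleGraph V)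
    [DecidableRel G.Adj] (hdeg : ∀ v, 0 < G.degree v)
    (H : V → V → ℝ) (hH : IsHittingTime G H) (b : V) :
    ∑ j ∈ G.neighborFinset b, H j b
      = 2 * (G.edgeFinset.card : ℝ) - (G.degree b : ℝ) := by
  classical
  set A : V → V → ℝ := fun a j => if G.Adj a j then 1 else 0 with hA
  have hAT : ∀ a j, (G.degree a : ℝ) * (transMatrix G a j * H j b) = A a j * H j b := by
    intro a j
    simp only [transMatrix, hA]
    split_ifs with h
    · have hne : (G.degree a : ℝ) ≠ 0 := by exact_mod_cast (hdeg a).ne'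
      field_simp
    · ring
  have step1 : ∀ a, (G.degree a : ℝ) * H a b
      = ((G.degree a : ℝ) + ∑ j, A a j * H j b)
        - (if a = b then ((G.degree b : ℝ) + ∑ j, A b j * H j b) else 0) := by
    intro a
    by_cases hab : a = b
    · subst hab; simp [hH.1]
    · rw [if_neg hab, sub_zero, hH.2 a b hab, mul_add, mul_one, Finset.mul_sum]
      congr 1
      exact Finset.sum_congr rfl fun j _ => hAT a j
  have hsum : ∑ a, (G.degree a : ℝ) * H a b
      = (∑ a, ((G.degree a : ℝ) + ∑ j, A a j * H j b))
        - ((G.degree b : ℝ) + ∑ j, A b j * H j b) := by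
    rw [Finset.sum_congr rfl fun a _ => step1 a, Finset.sum_sub_distrib,
      Finset.sum_ite_eq' Finset.univ b
        (fun _ => ((G.degree b : ℝ) + ∑ j, A b j * H j b))]
    simp
  have hswap : ∑ a, ∑ j, A a j * H j b = ∑ j, (G.degree j : ℝ) * H j b := by
    rw [Finset.sum_comm]
    refine Finset.sum_congr rfl fun j _ => ?_
    rw [← Finset.sum_mul]
    congr 1
    simp only [hA]
    rw [Finset.sum_boole]
    congr 1
    rw [SimpleGraph.degree, SimpleGraph.neighborFinset_eq_filter]
    congr 1
    ext a
    simp [SimpleGraph.adj_comm]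
  have hdegsum : ∑ a, (G.degree a : ℝ) = 2 * (G.edgeFinset.card : ℝ) := by
    exact_mod_cast congrArg (Nat.cast : ℕ → ℝ) G.sum_degrees_eq_twice_card_edges
  have hnb : ∑ j, A b j * H j b = ∑ j ∈ G.neighborFinset b, H j b := by
    simp only [hA, ite_mul, one_mul, zero_mul]
    rw [SimpleGraph.neighborFinset_eq_filter, Finset.sum_filter]
  rw [Finset.sum_add_distrib, hswap, hdegsum] at hsum
  rw [← hnb]
  linarith [hsum]

/-- No tree on more than two vertices is highly symmetric: if `G` is a tree with
more than two vertices, then the hitting times of the simple random walk on `G`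
are not symmetric. -/
theorem tree_not_highly_symmetric {V : Type*} [Fintype V] [DecidableEq V]
    (G : SimpleGraph V) [DecidableRel G.Adj] (htree : G.IsTree)
    (hcard : 2 < Fintype.card V)
    (H : V → V → ℝ) (hH : IsHittingTime G H) :
    ¬ ∀ a b, H a b = H b a := by
  intro hsym
  classical
  have hconn : G.Connected := htree.isConnected
  have hdeg : ∀ v, 0 < G.degree v := by
    intro v
    rw [SimpleGraph.degree_pos_iff_exists_adj]
    obtain ⟨w, hw⟩ := Fintype.exists_ne_of_one_lt_card (by omega) v
    obtain ⟨p⟩ := hconn.preconnected v w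
    cases p with
    | nil => exact absurd rfl hw
    | cons h q => exact ⟨_, h⟩
  have hm : G.edgeFinset.card + 1 = Fintype.card V := htree.card_edgeFinset
  -- there is a leaf
  obtain ⟨ℓ, hleaf⟩ : ∃ ℓ, G.degree ℓ = 1 := by
    by_contra hno
    push_neg at hno
    have h2 : ∀ v ∈ Finset.univ, 2 ≤ G.degree v := by
      intro v _
      have := hdeg v
      have := hno v
      omega
    have hle := Finset.card_nsmul_le_sum Finset.univ (fun v => G.degree v) 2 h2
    rw [G.sum_degrees_eq_twice_card_edges] at hle
    simp only [smul_eq_mul, Finset.card_univ] at hle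
    omega
  obtain ⟨u, hu⟩ := Finset.card_eq_one.mp (by rw [← SimpleGraph.card_neighborFinset_eq_degree] at hleaf; exact hleaf)
  have hadj : G.Adj ℓ u := by
    rw [← SimpleGraph.mem_neighborFinset, hu]; exact Finset.mem_singleton_self u
  have hne : ℓ ≠ u := hadj.ne
  have hsum0 : ∑ j, transMatrix G ℓ j * H j u = 0 := by
    have heach : ∀ j, transMatrix G ℓ j * H j u = if G.Adj ℓ j then H j u else 0 := by
      intro j
      simp only [transMatrix, hleaf]
      split_ifs with h <;> simp
    rw [Finset.sum_congr rfl fun j _ => heach j, ← Finset.sum_filter,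
      ← SimpleGraph.neighborFinset_eq_filter, hu, Finset.sum_singleton, hH.1]
  have hHlu : H ℓ u = 1 := by rw [hH.2 ℓ u hne, hsum0]; ring
  have hret := return_identity G hdeg H hH ℓ
  rw [hu, Finset.sum_singleton, hsym u ℓ, hHlu, hleaf] at hret
  push_cast at hret
  have : (G.edgeFinset.card : ℝ) = 1 := by linarith
  have hm1 : G.edgeFinset.card = 1 := by exact_mod_cast this
  omega
end

section
/- If G is a highly symmetric graph with a cut-edge (i,j), then the two components G_i and G_j obtained by deleting the edge (i,j) satisfy |E(G_i)| = |E(G_j)| = (m-1)/2, where m = |E(G)|; in particular the two components have the same number of edges. -/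
open Finset Matrix Polynomial

/-! Let `S` be the set of vertices that `i` still reaches once the bridge `ij` is deleted, so
that `ij` is the only edge leaving `S`. Summing the first-step equations
`∑_{b ~ a} (H a j - H b j) = deg a` over `a ∈ S`, the terms of edges inside `S` cancel in pairs
and only the bridge survives: `H i j = ∑_{a ∈ S} deg a = 2 |E(G_i)| + 1`. Symmetrically
`H j i = 2 |E(G_j)| + 1`, so `H i j = H j i` gives `|E(G_i)| = |E(G_j)|`, while the degree sums of
`S` and its complement add up to `2m`, giving `|E(G_i)| + |E(G_j)| = m - 1`. -/

namespace SimpleGraph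

section EdgeBoundary

variable {V : Type*} [Fintype V] [DecidableEq V] (G : SimpleGraph V) [DecidableRel G.Adj]

theorem sum_sum_neighbor_sub_eq_sum_boundary (S : Finset V) (f : V → ℝ) :
    ∑ a ∈ S, ∑ b ∈ G.neighborFinset a, (f a - f b) =
      ∑ a ∈ S, ∑ b ∈ G.neighborFinset a with b ∉ S, (f a - f b) := by
  have interior : ∑ a ∈ S, ∑ b ∈ G.neighborFinset a with b ∈ S, (f a - f b) = 0 := by
    have hS : ∀ a, ∑ b ∈ G.neighborFinset a with b ∈ S, (f a - f b) =
        ∑ b ∈ S, if G.Adj a b then f a - f b else 0 := by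
      intro a
      rw [← sum_filter]
      congr 1
      ext b
      simp [and_comm]
    simp only [hS]
    have hanti : ∑ a ∈ S, ∑ b ∈ S, (if G.Adj a b then f a - f b else 0) =
        -∑ a ∈ S, ∑ b ∈ S, (if G.Adj a b then f a - f b else 0) := by
      conv_lhs => rw [sum_comm]
      simp only [← sum_neg_distrib]
      refine sum_congr rfl fun a _ => sum_congr rfl fun b _ => ?_
      simp only [G.adj_comm b a]
      split_ifs <;> ring
    linarith
  rw [← add_zero (∑ a ∈ S, ∑ b ∈ _ with b ∉ S, _), ← interior, ← sum_add_distrib]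
  exact sum_congr rfl fun a _ => (sum_filter_add_sum_filter_not _ _ _).symm.trans (add_comm _ _)

theorem sum_card_neighbor_mem_eq_two_mul_card_edges (S : Finset V) :
    ∑ a ∈ S, #{b ∈ G.neighborFinset a | b ∈ S} =
      2 * #{e ∈ G.edgeFinset | ∀ x ∈ e, x ∈ S} := by
  classical
  set G₂ := ((⊤ : G.Subgraph).induce (S : Set V)).spanningCoe
  have hdeg : ∀ a,
      G₂.degree a = if a ∈ S then #{b ∈ G.neighborFinset a | b ∈ S} else 0 := by
    intro a
    rw [← card_neighborFinset_eq_degree]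
    split_ifs with ha
    · congr 1; ext b; simp [G₂, ha, and_comm]
    · rw [card_eq_zero]; ext b; simp [G₂, ha]
  have hedges : G₂.edgeFinset = {e ∈ G.edgeFinset | ∀ x ∈ e, x ∈ S} := by
    ext e
    induction e using Sym2.ind with
    | _ a b => simp [G₂, and_comm, and_assoc]
  rw [← hedges, ← sum_degrees_eq_twice_card_edges,
    ← sum_filter_add_sum_filter_not univ (· ∈ S)]
  simp [hdeg]

theorem sum_degree_eq_two_mul_card_edges_add_boundary (S : Finset V) :
    ∑ a ∈ S, G.degree a = 2 * #{e ∈ G.edgeFinset | ∀ x ∈ e, x ∈ S} +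
      ∑ a ∈ S, #{b ∈ G.neighborFinset a | b ∉ S} := by
  rw [← sum_card_neighbor_mem_eq_two_mul_card_edges, ← sum_add_distrib]
  exact sum_congr rfl fun a _ => (card_filter_add_card_filter_not _).symm

variable {G}

theorem sum_boundary_eq_of_forall_adj_iff {M : Type*} [AddCommMonoid M] {S : Finset V} {i j : V}
    (hi : i ∈ S) (hj : j ∉ S) (hS : ∀ a ∈ S, ∀ b ∉ S, G.Adj a b ↔ a = i ∧ b = j)
    (g : V → V → M) :
    ∑ a ∈ S, ∑ b ∈ G.neighborFinset a with b ∉ S, g a b = g i j := by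
  have hbdry : ∀ a ∈ S, {b ∈ G.neighborFinset a | b ∉ S} = if a = i then {j} else ∅ := by
    intro a ha
    ext b
    by_cases hb : b ∈ S
    · split_ifs <;> simp [hb, ne_of_mem_of_not_mem hb hj]
    · simp only [mem_filter, mem_neighborFinset, hS a ha b hb, hb, not_false_eq_true, and_true]
      split_ifs <;> simp_all [eq_comm]
  rw [sum_congr rfl fun a ha => by rw [hbdry a ha], sum_eq_single_of_mem i hi]
  · simp
  · intro a _ hai
    simp [hai]

theorem sum_degree_eq_two_mul_card_edges_add_one {S : Finset V} {i j : V}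
    (hi : i ∈ S) (hj : j ∉ S) (hS : ∀ a ∈ S, ∀ b ∉ S, G.Adj a b ↔ a = i ∧ b = j) :
    ∑ a ∈ S, G.degree a = 2 * #{e ∈ G.edgeFinset | ∀ x ∈ e, x ∈ S} + 1 := by
  simp only [sum_degree_eq_two_mul_card_edges_add_boundary, card_eq_sum_ones,
    sum_boundary_eq_of_forall_adj_iff hi hj hS]

end EdgeBoundary

section Bridge

variable {V : Type*} {G : SimpleGraph V} {i j : V}

theorem Preconnected.reachable_deleteEdges_or (hG : G.Preconnected) (i j x : V) :
    (G.deleteEdges {s(i, j)}).Reachable i x ∨ (G.deleteEdges {s(i, j)}).Reachable j x := by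
  set P : V → Prop := fun x =>
    (G.deleteEdges {s(i, j)}).Reachable i x ∨ (G.deleteEdges {s(i, j)}).Reachable j x
  have step : ∀ {u v : V}, G.Adj u v → P v → P u := by
    intro u v huv hv
    by_cases he : s(u, v) = s(i, j)
    · rcases Sym2.eq_iff.1 he with ⟨rfl, -⟩ | ⟨rfl, -⟩
      · exact .inl .rfl
      · exact .inr .rfl
    · have hvu : (G.deleteEdges {s(i, j)}).Adj v u := by
        rw [deleteEdges_adj, Set.mem_singleton_iff, Sym2.eq_swap]
        exact ⟨huv.symm, he⟩
      exact hv.imp (·.trans hvu.reachable) (·.trans hvu.reachable)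
  have walk : ∀ {u v : V}, G.Walk u v → P v → P u := by
    intro u v w
    induction w with
    | nil => exact id
    | cons huv _ ih => exact step huv ∘ ih
  exact walk (hG x i).some (.inl .rfl)

theorem Preconnected.isBridge_of_not_preconnected_deleteEdges (hG : G.Preconnected)
    (h : ¬(G.deleteEdges {s(i, j)}).Preconnected) : G.IsBridge s(i, j) := by
  intro hij
  refine h fun u v => ?_
  have hreach : ∀ x, (G.deleteEdges {s(i, j)}).Reachable i x := fun x =>
    (hG.reachable_deleteEdges_or i j x).elim id hij.trans
  exact (hreach u).symm.trans (hreach v)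

theorem Preconnected.not_reachable_deleteEdges_iff (hG : G.Preconnected) (hb : G.IsBridge s(i, j))
    (x : V) :
    ¬(G.deleteEdges {s(i, j)}).Reachable i x ↔ (G.deleteEdges {s(i, j)}).Reachable j x :=
  ⟨(hG.reachable_deleteEdges_or i j x).resolve_left, fun hjx hix => hb (hix.trans hjx.symm)⟩

theorem IsBridge.adj_iff_of_mem {S : Set V} (hadj : G.Adj i j) (hb : G.IsBridge s(i, j))
    (hS : ∀ x, x ∈ S ↔ (G.deleteEdges {s(i, j)}).Reachable i x) {a b : V} (ha : a ∈ S)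
    (hb' : b ∉ S) : G.Adj a b ↔ a = i ∧ b = j := by
  rw [hS] at ha hb'
  refine ⟨fun hab => ?_, by rintro ⟨rfl, rfl⟩; exact hadj⟩
  by_cases he : s(a, b) = s(i, j)
  · rcases Sym2.eq_iff.1 he with hij | ⟨rfl, rfl⟩
    · exact hij
    · exact absurd ha hb
  · exact absurd (ha.trans (deleteEdges_adj.2 ⟨hab, he⟩).reachable) hb'

theorem IsBridge.sum_degree_eq [Fintype V] [DecidableEq V] [DecidableRel G.Adj]
    (hadj : G.Adj i j) (hb : G.IsBridge s(i, j)) {S : Finset V}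
    (hS : ∀ x, x ∈ S ↔ (G.deleteEdges {s(i, j)}).Reachable i x) :
    ∑ a ∈ S, G.degree a = 2 * {e | e ∈ (G.deleteEdges {s(i, j)}).edgeSet ∧
        ∀ x ∈ e, (G.deleteEdges {s(i, j)}).Reachable i x}.ncard + 1 := by
  rw [sum_degree_eq_two_mul_card_edges_add_one ((hS i).2 .rfl) (fun hj => hb ((hS j).1 hj))
    fun a ha b hb' => hb.adj_iff_of_mem (S := (S : Set V)) hadj hS ha hb',
    ← Set.ncard_coe_finset]
  congr 3
  ext e
  simp only [coe_filter, mem_edgeFinset, hS, Set.mem_ofPred_eq, edgeSet_deleteEdges,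
    Set.mem_sdiff, Set.mem_singleton_iff]
  refine ⟨fun ⟨he, hreach⟩ => ⟨⟨he, ?_⟩, hreach⟩, fun ⟨⟨he, _⟩, hreach⟩ => ⟨he, hreach⟩⟩
  rintro rfl
  exact hb (hreach j (Sym2.mem_mk_right i j))

theorem Preconnected.ncard_add_ncard_add_one [Fintype V] [DecidableEq V] [DecidableRel G.Adj]
    (hG : G.Preconnected) (hadj : G.Adj i j) (hb : G.IsBridge s(i, j)) :
    {e | e ∈ (G.deleteEdges {s(i, j)}).edgeSet ∧
        ∀ x ∈ e, (G.deleteEdges {s(i, j)}).Reachable i x}.ncard +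
      {e | e ∈ (G.deleteEdges {s(i, j)}).edgeSet ∧
        ∀ x ∈ e, (G.deleteEdges {s(i, j)}).Reachable j x}.ncard + 1 = #G.edgeFinset := by
  classical
  set Si : Finset V := {x | (G.deleteEdges {s(i, j)}).Reachable i x}
  have hdeg_i := hb.sum_degree_eq hadj (S := Si) (by simp [Si])
  have hdeg_j := (Sym2.eq_swap ▸ hb : G.IsBridge s(j, i)).sum_degree_eq hadj.symm (S := Siᶜ)
    (by simp [Si, Sym2.eq_swap, hG.not_reachable_deleteEdges_iff hb])
  rw [Sym2.eq_swap (a := j)] at hdeg_j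
  have htotal := sum_add_sum_compl Si (fun a => G.degree a)
  rw [sum_degrees_eq_twice_card_edges] at htotal
  omega

end Bridge

end SimpleGraph

section HittingTime

variable {V : Type*} [Fintype V] {G : SimpleGraph V} [DecidableRel G.Adj] {H : V → V → ℝ}

theorem IsHittingTime.sum_neighbor_sub (hH : IsHittingTime G H) {a b : V} (hab : a ≠ b) :
    ∑ c ∈ G.neighborFinset a, (H a b - H c b) = G.degree a := by
  have hstep : ∑ c, transMatrix G a c * H c b =
      (∑ c ∈ G.neighborFinset a, H c b) / G.degree a := by
    simp [transMatrix, ite_mul, sum_ite, SimpleGraph.neighborFinset_eq_filter, div_eq_inv_mul,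
      mul_sum]
  rw [sum_sub_distrib, sum_const, SimpleGraph.card_neighborFinset_eq_degree, nsmul_eq_mul,
    hH.2 a b hab, hstep]
  rcases eq_or_ne (G.degree a : ℝ) 0 with hd | hd
  · have hN : G.neighborFinset a = ∅ := by
      rw [← card_eq_zero, SimpleGraph.card_neighborFinset_eq_degree]
      exact_mod_cast hd
    simp [hN, hd]
  · field_simp
    ring

theorem IsHittingTime.eq_sum_degree [DecidableEq V] (hH : IsHittingTime G H) {S : Finset V}
    {i j : V}
    (hi : i ∈ S) (hj : j ∉ S) (hS : ∀ a ∈ S, ∀ b ∉ S, G.Adj a b ↔ a = i ∧ b = j) :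
    H i j = ∑ a ∈ S, (G.degree a : ℝ) :=
  calc H i j = H i j - H j j := by rw [hH.1, sub_zero]
    _ = ∑ a ∈ S, ∑ b ∈ G.neighborFinset a with b ∉ S, (H a j - H b j) :=
      (SimpleGraph.sum_boundary_eq_of_forall_adj_iff hi hj hS fun a b => H a j - H b j).symm
    _ = ∑ a ∈ S, ∑ b ∈ G.neighborFinset a, (H a j - H b j) :=
      (G.sum_sum_neighbor_sub_eq_sum_boundary S _).symm
    _ = ∑ a ∈ S, (G.degree a : ℝ) :=
      sum_congr rfl fun a ha => hH.sum_neighbor_sub (ne_of_mem_of_not_mem ha hj)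

theorem IsHittingTime.eq_two_mul_ncard_add_one [DecidableEq V] (hH : IsHittingTime G H)
    {i j : V} (hadj : G.Adj i j) (hb : G.IsBridge s(i, j)) :
    H i j = 2 * ({e | e ∈ (G.deleteEdges {s(i, j)}).edgeSet ∧
        ∀ x ∈ e, (G.deleteEdges {s(i, j)}).Reachable i x}.ncard : ℝ) + 1 := by
  classical
  set S : Finset V := {x | (G.deleteEdges {s(i, j)}).Reachable i x}
  have hS : ∀ x, x ∈ S ↔ (G.deleteEdges {s(i, j)}).Reachable i x := by simp [S]
  rw [hH.eq_sum_degree ((hS i).2 .rfl) (fun hj => hb ((hS j).1 hj))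
    fun a ha b hb' => hb.adj_iff_of_mem (S := (S : Set V)) hadj hS ha hb',
    ← Nat.cast_sum, hb.sum_degree_eq hadj hS]
  push_cast
  ring

end HittingTime

/-- If `G` is a highly symmetric graph with `m` edges and `(i,j)` is a cut-edge,
then the two components `G_i` and `G_j` obtained by deleting the edge `(i,j)`
each have `(m-1)/2` edges; in particular they have the same number of edges. -/
theorem HS_cut_edge_components {V : Type*} [Fintype V] [DecidableEq V]
    (G : SimpleGraph V) [DecidableRel G.Adj] (hconn : G.Connected)
    (H : V → V → ℝ) (hH : IsHittingTime G H) (hHS : ∀ a b, H a b = H b a)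
    (i j : V) (hadj : G.Adj i j)
    (hcut : ¬ (G.deleteEdges {s(i, j)}).Preconnected) :
    {e : Sym2 V | e ∈ (G.deleteEdges {s(i, j)}).edgeSet ∧
        ∀ x ∈ e, (G.deleteEdges {s(i, j)}).Reachable i x}.ncard
        = (G.edgeFinset.card - 1) / 2 ∧
      {e : Sym2 V | e ∈ (G.deleteEdges {s(i, j)}).edgeSet ∧
        ∀ x ∈ e, (G.deleteEdges {s(i, j)}).Reachable j x}.ncard
        = (G.edgeFinset.card - 1) / 2 := by
  have hb := hconn.preconnected.isBridge_of_not_preconnected_deleteEdges hcut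
  have hsum := hconn.preconnected.ncard_add_ncard_add_one hadj hb
  have hij := hH.eq_two_mul_ncard_add_one hadj hb
  have hji := hH.eq_two_mul_ncard_add_one hadj.symm (Sym2.eq_swap ▸ hb)
  rw [Sym2.eq_swap (a := j)] at hji
  set ni := {e : Sym2 V | e ∈ (G.deleteEdges {s(i, j)}).edgeSet ∧
    ∀ x ∈ e, (G.deleteEdges {s(i, j)}).Reachable i x}.ncard
  set nj := {e : Sym2 V | e ∈ (G.deleteEdges {s(i, j)}).edgeSet ∧
    ∀ x ∈ e, (G.deleteEdges {s(i, j)}).Reachable j x}.ncard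
  have hequal : ni = nj := by
    have : (ni : ℝ) = nj := by linarith [hHS i j]
    exact_mod_cast this
  omega
end

section
/- A highly symmetric graph cannot contain two distinct cut-edges. -/
open Finset Matrix Polynomial

section helpers
variable {V : Type*} [Fintype V] [DecidableEq V] (G : SimpleGraph V) [DecidableRel G.Adj]

open scoped Classical in
/-- the component of `x` in `G` minus the edge `e`, as a finset -/
noncomputable def cutComp (e : Sym2 V) (x : V) : Finset V :=
  Finset.univ.filter (fun v => (G.deleteEdges {e}).Reachable x v)

open scoped Classical in
lemma mem_cutComp {e : Sym2 V} {x v : V} :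
    v ∈ cutComp G e x ↔ (G.deleteEdges {e}).Reachable x v := by
  simp [cutComp]

variable {G}

lemma degree_pos_of_reach_ne {a z : V} (h : G.Reachable a z) (hne : a ≠ z) :
    0 < G.degree a := by
  obtain ⟨p⟩ := h
  cases p with
  | nil => exact absurd rfl hne
  | cons h _ => exact (G.degree_pos_iff_exists_adj a).2 ⟨_, h⟩

lemma reach_dichotomy (hconn : G.Connected) {x y : V} (hxy : G.Adj x y) (v : V) :
    (G.deleteEdges {s(x,y)}).Reachable x v ∨ (G.deleteEdges {s(x,y)}).Reachable y v := by
  obtain ⟨p⟩ := hconn.preconnected x v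
  set G' := G.deleteEdges {s(x,y)} with hG'
  suffices h : ∀ (u w : V) (_ : G.Walk u w), (G'.Reachable x u ∨ G'.Reachable y u) →
      (G'.Reachable x w ∨ G'.Reachable y w) from
    h x v p (Or.inl (SimpleGraph.Reachable.refl x))
  intro u w p
  induction p with
  | nil => exact id
  | @cons u u' w h p ih =>
    intro hu
    apply ih
    by_cases he : s(u, u') = s(x, y)
    · rw [Sym2.eq_iff] at he
      rcases he with ⟨rfl, rfl⟩ | ⟨rfl, rfl⟩
      · exact Or.inr (SimpleGraph.Reachable.refl _)
      · exact Or.inl (SimpleGraph.Reachable.refl _)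
    · have hadj : G'.Adj u u' := by
        rw [hG', SimpleGraph.deleteEdges_adj]
        exact ⟨h, by simpa using he⟩
      rcases hu with hu | hu
      · exact Or.inl (hu.trans hadj.reachable)
      · exact Or.inr (hu.trans hadj.reachable)

lemma not_reach_of_cut (hconn : G.Connected) {x y : V} (hxy : G.Adj x y)
    (hcut : ¬ (G.deleteEdges {s(x,y)}).Preconnected) :
    ¬ (G.deleteEdges {s(x,y)}).Reachable x y := by
  intro hR
  apply hcut
  intro u v
  have hu := reach_dichotomy hconn hxy u
  have hv := reach_dichotomy hconn hxy v
  have key : ∀ w, (G.deleteEdges {s(x,y)}).Reachable x w := by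
    intro w
    rcases reach_dichotomy hconn hxy w with h | h
    · exact h
    · exact hR.trans h
  exact (key u).symm.trans (key v)

end helpers

section main
variable {V : Type*} [Fintype V] [DecidableEq V] {G : SimpleGraph V} [DecidableRel G.Adj]
set_option linter.unusedSectionVars false

open scoped Classical in
lemma hitting_eq_degSum (hconn : G.Connected) (H : V → V → ℝ) (hH : IsHittingTime G H)
    {x y : V} (hxy : G.Adj x y)
    (hcut : ¬ (G.deleteEdges {s(x,y)}).Preconnected) :
    H x y = ∑ a ∈ cutComp G s(x,y) x, (G.degree a : ℝ) := by
  set G' := G.deleteEdges {s(x,y)} with hG'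
  set S := cutComp G s(x,y) x with hS
  have hnR : ¬ G'.Reachable x y := not_reach_of_cut hconn hxy hcut
  have hxS : x ∈ S := (mem_cutComp _).2 (SimpleGraph.Reachable.refl x)
  have hyS : y ∉ S := fun h => hnR ((mem_cutComp _).1 h)
  have haSy : ∀ a ∈ S, a ≠ y := fun a ha h => hyS (h ▸ ha)
  -- step 1
  have step1 : ∀ a ∈ S, (G.degree a : ℝ) * H a y
      = G.degree a + ∑ j, (if G.Adj a j then H j y else 0) := by
    intro a ha
    have hd : (0 : ℝ) < G.degree a := by
      exact_mod_cast degree_pos_of_reach_ne (hconn.preconnected a y) (haSy a ha)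
    rw [hH.2 a y (haSy a ha), mul_add, mul_one, Finset.mul_sum]
    congr 1
    apply Finset.sum_congr rfl
    intro j _
    simp only [transMatrix]
    split_ifs with h
    · field_simp
    · ring
  -- per-j claim
  have perj : ∀ j, (∑ a ∈ S, (if G.Adj a j then H j y else 0))
      = (if j ∈ S then (G.degree j : ℝ) * H j y else 0) - (if j = x then H x y else 0) := by
    intro j
    rw [← Finset.sum_filter, Finset.sum_const, nsmul_eq_mul]
    by_cases hjx : j = x
    · subst hjx
      have hfil : S.filter (fun a => G.Adj a j) = (G.neighborFinset j).erase y := by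
        ext a
        simp only [Finset.mem_filter, Finset.mem_erase, SimpleGraph.mem_neighborFinset]
        constructor
        · rintro ⟨haS, hadj⟩
          exact ⟨haSy a haS, hadj.symm⟩
        · rintro ⟨hay, hadj⟩
          refine ⟨(mem_cutComp _).2 ?_, hadj.symm⟩
          have : G'.Adj j a := by
            rw [hG', SimpleGraph.deleteEdges_adj]
            refine ⟨hadj, ?_⟩
            simp only [Set.mem_singleton_iff, Sym2.eq_iff]
            rintro (⟨-, rfl⟩ | ⟨rfl, -⟩)
            · exact hay rfl
            · exact hxy.ne rfl
          exact this.reachable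
      have hycard : y ∈ G.neighborFinset j := by
        rw [SimpleGraph.mem_neighborFinset]; exact hxy
      have hdeg1 : 1 ≤ G.degree j := by
        rw [← G.card_neighborFinset_eq_degree]
        exact Finset.card_pos.2 ⟨y, hycard⟩
      rw [hfil, Finset.card_erase_of_mem hycard, G.card_neighborFinset_eq_degree]
      rw [if_pos hxS, if_pos rfl]
      rw [Nat.cast_sub hdeg1]
      push_cast
      ring
    · by_cases hjS : j ∈ S
      · have hfil : S.filter (fun a => G.Adj a j) = G.neighborFinset j := by
          ext a
          simp only [Finset.mem_filter, SimpleGraph.mem_neighborFinset]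
          constructor
          · rintro ⟨-, hadj⟩; exact hadj.symm
          · intro hadj
            refine ⟨?_, hadj.symm⟩
            have : G'.Adj j a := by
              rw [hG', SimpleGraph.deleteEdges_adj]
              refine ⟨hadj, ?_⟩
              simp only [Set.mem_singleton_iff, Sym2.eq_iff]
              rintro (⟨rfl, -⟩ | ⟨rfl, -⟩)
              · exact hjx rfl
              · exact hyS hjS
            exact (mem_cutComp _).2 (((mem_cutComp _).1 hjS).trans this.reachable)
        rw [hfil, G.card_neighborFinset_eq_degree, if_pos hjS, if_neg hjx, sub_zero]
      · by_cases hjy : j = y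
        · subst hjy
          rw [hH.1 j, if_neg hjS, if_neg hjx]
          ring
        · have hfil : S.filter (fun a => G.Adj a j) = ∅ := by
            ext a
            simp only [Finset.mem_filter, Finset.notMem_empty, iff_false, not_and]
            intro haS hadj
            apply hjS
            have : G'.Adj a j := by
              rw [hG', SimpleGraph.deleteEdges_adj]
              refine ⟨hadj, ?_⟩
              simp only [Set.mem_singleton_iff, Sym2.eq_iff]
              rintro (⟨rfl, rfl⟩ | ⟨rfl, rfl⟩)
              · exact hjy rfl
              · exact hyS haS
            exact (mem_cutComp _).2 (((mem_cutComp _).1 haS).trans this.reachable)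
          rw [hfil, if_neg hjS, if_neg hjx]
          simp
  -- combine
  have h2 : (∑ j : V, if j = x then H x y else 0) = H x y := by simp
  have hL := Finset.sum_congr rfl step1
  rw [Finset.sum_add_distrib] at hL
  have hD : (∑ a ∈ S, ∑ j : V, (if G.Adj a j then H j y else 0))
      = (∑ j ∈ S, (G.degree j : ℝ) * H j y) - H x y := by
    rw [Finset.sum_comm, Finset.sum_congr rfl (fun j _ => perj j), Finset.sum_sub_distrib,
        Finset.sum_ite_mem, Finset.univ_inter, h2]
  rw [hD] at hL
  linarith [hL]

end main

section main2
variable {V : Type*} [Fintype V] [DecidableEq V] {G : SimpleGraph V} [DecidableRel G.Adj]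
set_option linter.unusedSectionVars false

lemma comp_disjoint (hconn : G.Connected) {x y : V} (hxy : G.Adj x y)
    (hcut : ¬ (G.deleteEdges {s(x,y)}).Preconnected) :
    Disjoint (cutComp G s(x,y) x) (cutComp G s(x,y) y) := by
  rw [Finset.disjoint_left]
  intro a hax hay
  exact not_reach_of_cut hconn hxy hcut (((mem_cutComp _).1 hax).trans ((mem_cutComp _).1 hay).symm)

lemma degSum_eq_card (hconn : G.Connected) (H : V → V → ℝ) (hH : IsHittingTime G H)
    (hHS : ∀ a b, H a b = H b a) {x y : V} (hxy : G.Adj x y)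
    (hcut : ¬ (G.deleteEdges {s(x,y)}).Preconnected) :
    ∑ a ∈ cutComp G s(x,y) x, G.degree a = G.edgeFinset.card := by
  have hswap : s(y,x) = s(x,y) := Sym2.eq_swap
  have hcut' : ¬ (G.deleteEdges {s(y,x)}).Preconnected := by rwa [hswap]
  have h1 := hitting_eq_degSum hconn H hH hxy hcut
  have h2 := hitting_eq_degSum hconn H hH hxy.symm hcut'
  rw [hswap] at h2
  have hdisj := comp_disjoint hconn hxy hcut
  have hunion : cutComp G s(x,y) x ∪ cutComp G s(x,y) y = Finset.univ := by
    ext v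
    simp only [Finset.mem_union, Finset.mem_univ, iff_true]
    rcases reach_dichotomy hconn hxy v with h | h
    · exact Or.inl ((mem_cutComp _).2 h)
    · exact Or.inr ((mem_cutComp _).2 h)
  have heq : (∑ a ∈ cutComp G s(x,y) x, G.degree a) = ∑ a ∈ cutComp G s(x,y) y, G.degree a := by
    have : (∑ a ∈ cutComp G s(x,y) x, (G.degree a : ℝ))
        = ∑ a ∈ cutComp G s(x,y) y, (G.degree a : ℝ) := by
      rw [← h1, ← h2, hHS]
    exact_mod_cast this
  have htot : (∑ a ∈ cutComp G s(x,y) x, G.degree a) + ∑ a ∈ cutComp G s(x,y) y, G.degree a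
      = 2 * G.edgeFinset.card := by
    rw [← Finset.sum_union hdisj, hunion]
    exact G.sum_degrees_eq_twice_card_edges
  omega

lemma reach_transfer {z v : V} {e₁ : Sym2 V} {x₂ y₂ : V} (hadj : G.Adj x₂ y₂)
    (hne : s(x₂,y₂) ≠ e₁) (hzx : ¬ (G.deleteEdges {e₁}).Reachable z x₂)
    (h : (G.deleteEdges {e₁}).Reachable z v) :
    (G.deleteEdges {s(x₂,y₂)}).Reachable z v := by
  set G₁ := G.deleteEdges {e₁} with hG₁
  set G₂ := G.deleteEdges {s(x₂,y₂)} with hG₂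
  suffices key : ∀ (u w : V) (_ : G₁.Walk u w), G₁.Reachable z u → G₂.Reachable u w by
    obtain ⟨p⟩ := h
    exact key z v p (SimpleGraph.Reachable.refl z)
  intro u w p
  induction p with
  | nil => exact fun _ => SimpleGraph.Reachable.refl _
  | @cons u u' w h p ih =>
    intro hzu
    have hGadj : G.Adj u u' := ((SimpleGraph.deleteEdges_adj.1 h)).1
    have hne2 : s(u, u') ≠ s(x₂, y₂) := by
      intro heq
      rw [Sym2.eq_iff] at heq
      rcases heq with ⟨rfl, rfl⟩ | ⟨rfl, rfl⟩
      · exact hzx hzu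
      · have : G₁.Adj u u' := h
        exact hzx (hzu.trans this.reachable)
    have h2 : G₂.Adj u u' := by
      rw [hG₂, SimpleGraph.deleteEdges_adj]
      exact ⟨hGadj, by simpa using hne2⟩
    exact h2.reachable.trans (ih (hzu.trans h.reachable))

lemma no_two_cuts_aux (hconn : G.Connected) (H : V → V → ℝ) (hH : IsHittingTime G H)
    (hHS : ∀ a b, H a b = H b a) {z w x₂ y₂ : V} (hzw : G.Adj z w)
    (hadj₂ : G.Adj x₂ y₂) (hne : s(x₂,y₂) ≠ s(z,w))
    (hcut₁ : ¬ (G.deleteEdges {s(z,w)}).Preconnected)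
    (hcut₂ : ¬ (G.deleteEdges {s(x₂,y₂)}).Preconnected)
    (hzx : ¬ (G.deleteEdges {s(z,w)}).Reachable z x₂) : False := by
  set G₁ := G.deleteEdges {s(z,w)} with hG₁
  set G₂ := G.deleteEdges {s(x₂,y₂)} with hG₂
  set D := cutComp G s(z,w) z with hD
  have hDsum : ∑ a ∈ D, G.degree a = G.edgeFinset.card :=
    degSum_eq_card hconn H hH hHS hzw hcut₁
  -- pick an endpoint c of e₂ that reaches z in G₂
  have hzc : ∃ c, (c = x₂ ∨ c = y₂) ∧ G₂.Reachable c z := by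
    rcases reach_dichotomy hconn hadj₂ z with h | h
    · exact ⟨x₂, Or.inl rfl, h⟩
    · exact ⟨y₂, Or.inr rfl, h⟩
  obtain ⟨c, hc, hcz⟩ := hzc
  set C := cutComp G s(x₂,y₂) c with hC
  have hCsum : ∑ a ∈ C, G.degree a = G.edgeFinset.card := by
    rcases hc with rfl | rfl
    · exact degSum_eq_card hconn H hH hHS hadj₂ hcut₂
    · have hswap : s(c,x₂) = s(x₂,c) := Sym2.eq_swap
      have hcut' : ¬ (G.deleteEdges {s(c,x₂)}).Preconnected := by rwa [hswap]
      have := degSum_eq_card hconn H hH hHS hadj₂.symm hcut'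
      rwa [hswap] at this
  -- D ⊆ C and w ∈ C, w ∉ D
  have hDC : D ⊆ C := by
    intro v hv
    have h1 : G₁.Reachable z v := (mem_cutComp _).1 hv
    have h2 : G₂.Reachable z v := reach_transfer hadj₂ hne hzx h1
    exact (mem_cutComp _).2 (hcz.trans h2)
  have hwD : w ∉ D := fun h => not_reach_of_cut hconn hzw hcut₁ ((mem_cutComp _).1 h)
  have hwC : w ∈ C := by
    have hadjzw : G₂.Adj z w := by
      rw [hG₂, SimpleGraph.deleteEdges_adj]
      exact ⟨hzw, by simpa using hne.symm⟩
    exact (mem_cutComp _).2 (hcz.trans hadjzw.reachable)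
  have hsub : insert w D ⊆ C := Finset.insert_subset hwC hDC
  have hle : ∑ a ∈ insert w D, G.degree a ≤ ∑ a ∈ C, G.degree a :=
    Finset.sum_le_sum_of_subset hsub
  rw [Finset.sum_insert hwD] at hle
  have hdegw : 0 < G.degree w := (G.degree_pos_iff_exists_adj w).2 ⟨z, hzw.symm⟩
  omega

end main2

/-- A highly symmetric graph cannot contain two distinct cut-edges. -/
theorem HS_at_most_one_cut_edge {V : Type*} [Fintype V] [DecidableEq V]
    (G : SimpleGraph V) [DecidableRel G.Adj] (hconn : G.Connected)
    (H : V → V → ℝ) (hH : IsHittingTime G H) (hHS : ∀ a b, H a b = H b a)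
    (e₁ e₂ : Sym2 V) (he₁ : e₁ ∈ G.edgeSet) (he₂ : e₂ ∈ G.edgeSet)
    (hcut₁ : ¬ (G.deleteEdges {e₁}).Preconnected)
    (hcut₂ : ¬ (G.deleteEdges {e₂}).Preconnected) :
    e₁ = e₂ := by
  by_contra hne
  induction e₁ using Sym2.inductionOn with | _ x₁ y₁ => ?_
  induction e₂ using Sym2.inductionOn with | _ x₂ y₂ => ?_
  rw [SimpleGraph.mem_edgeSet] at he₁ he₂
  have hne' : s(x₂,y₂) ≠ s(x₁,y₁) := fun h => hne h.symm
  rcases reach_dichotomy hconn he₁ x₂ with h | h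
  · have hswap : s(y₁,x₁) = s(x₁,y₁) := Sym2.eq_swap
    have hcut' : ¬ (G.deleteEdges {s(y₁,x₁)}).Preconnected := by rwa [hswap]
    have hne'' : s(x₂,y₂) ≠ s(y₁,x₁) := by rw [hswap]; exact hne'
    have hzx : ¬ (G.deleteEdges {s(y₁,x₁)}).Reachable y₁ x₂ := by
      rw [hswap]
      intro hR
      exact not_reach_of_cut hconn he₁ hcut₁ (h.trans hR.symm)
    exact no_two_cuts_aux hconn H hH hHS he₁.symm he₂ hne'' hcut' hcut₂ hzx
  · have hzx : ¬ (G.deleteEdges {s(x₁,y₁)}).Reachable x₁ x₂ := fun hR =>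
      not_reach_of_cut hconn he₁ hcut₁ (hR.trans h.symm)
    exact no_two_cuts_aux hconn H hH hHS he₁ he₂ hne' hcut₁ hcut₂ hzx
end
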